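/- Let ≺₂ be the position-over-term extension of ≺₁ and let G be a finite set of labeled polynomials of I with f_i^[e_i] ∈ G for i = 1,…,m. If for every critical pair of G its S-polynomial has a standard representation with respect to G, then G is a full-labeled Gröbner basis for I. -/

import Mathlib

open MvPolynomial

noncomputable section

/-- Power products of `K[x₁,…,xₙ]`, recorded by their exponent vectors
(so `x^α ∣ x^β` is `α ≤ β` and `x^α · x^β` is `α + β`). -/
abbrev PP (n : ℕ) := Fin n →₀ ℕ

/-- Module terms `x^α • eᵢ` of the free module `R^m`. -/
abbrev MTerm (n m : ℕ) := PP n × Fin m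

/-- Multiplication of a module term by a power product. -/
def mtmul {n m : ℕ} (γ : PP n) (t : MTerm n m) : MTerm n m := (γ + t.1, t.2)

/-- A monomial order `≺₁` on the power products of `K[x₁,…,xₙ]`. -/
structure MonOrd (n : ℕ) where
  ord : LinearOrder (PP n)
  mul_lt : ∀ γ a b : PP n, ord.lt a b → ord.lt (γ + a) (γ + b)
  one_le : ∀ a : PP n, ord.le 0 a
  wf : WellFounded ord.lt

/-- A term order `≺₂` on the module terms of `R^m`: a well-order compatible with
multiplication by power products. -/
structure ModOrd (n m : ℕ) where
  ord : LinearOrder (MTerm n m)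
  mul_lt : ∀ (γ : PP n) (a b : MTerm n m), ord.lt a b → ord.lt (mtmul γ a) (mtmul γ b)
  wf : WellFounded ord.lt

variable {K : Type*} [Field K] {n m : ℕ}

/-- Elements of the free module `R^m`. -/
abbrev ModElem (K : Type*) [Field K] (n m : ℕ) := Fin m → MvPolynomial (Fin n) K

/-- `u · F = u₁f₁ + … + u_m f_m`. -/
def dotF (u : ModElem K n m) (F : Fin m → MvPolynomial (Fin n) K) : MvPolynomial (Fin n) K :=
  ∑ i, u i * F i

/-- Leading power product of a polynomial, valued in `WithBot` so that `lppW 0 = ⊥`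
(the convention `lpp 0 = 0 ≺ t` for all terms `t`). -/
def lppW (o : MonOrd n) (f : MvPolynomial (Fin n) K) : WithBot (PP n) :=
  @Finset.max (PP n) o.ord f.support

/-- Leading power product of a (nonzero) polynomial. -/
def lpp (o : MonOrd n) (f : MvPolynomial (Fin n) K) : PP n :=
  WithBot.unbotD 0 (lppW o f)

/-- Leading coefficient of a polynomial (`lc 0 = 0`). -/
def lc (o : MonOrd n) (f : MvPolynomial (Fin n) K) : K := f.coeff (lpp o f)

/-- The set of module terms occurring in a module element. -/
def msupport (u : ModElem K n m) : Finset (MTerm n m) :=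
  Finset.univ.biUnion fun i => (u i).support.image fun α => (α, i)

/-- Leading module term (signature) of a module element, `⊥` for the zero element. -/
def lppMW (o : ModOrd n m) (u : ModElem K n m) : WithBot (MTerm n m) :=
  @Finset.max (MTerm n m) o.ord (msupport u)

/-- Coefficient of a module element at a module term. -/
def mcoeff (u : ModElem K n m) (t : MTerm n m) : K := (u t.2).coeff t.1

/-- Leading coefficient of a module element (`0` for the zero element). -/
def lcM (o : ModOrd n m) (u : ModElem K n m) : K :=
  WithBot.recBotCoe 0 (fun t => mcoeff u t) (lppMW o u)

/-- `⪯` on `WithBot`-valued leading power products w.r.t. `≺₁`. -/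
def wbleP (o : MonOrd n) (a b : WithBot (PP n)) : Prop :=
  @LE.le (WithBot (PP n)) (@WithBot.instLE (PP n) o.ord.toLE) a b
/-- `≺` on `WithBot`-valued leading power products w.r.t. `≺₁`. -/
def wbltP (o : MonOrd n) (a b : WithBot (PP n)) : Prop :=
  @LT.lt (WithBot (PP n)) (@WithBot.instLT (PP n) o.ord.toLT) a b
/-- `⪯` on `WithBot`-valued signatures w.r.t. `≺₂`. -/
def wbleM (o : ModOrd n m) (a b : WithBot (MTerm n m)) : Prop :=
  @LE.le (WithBot (MTerm n m)) (@WithBot.instLE (MTerm n m) o.ord.toLE) a b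
/-- `≺` on `WithBot`-valued signatures w.r.t. `≺₂`. -/
def wbltM (o : ModOrd n m) (a b : WithBot (MTerm n m)) : Prop :=
  @LT.lt (WithBot (MTerm n m)) (@WithBot.instLT (MTerm n m) o.ord.toLT) a b

/-- Multiplication of a module element by a power product `x^t`. -/
def smulPP (t : PP n) (u : ModElem K n m) : ModElem K n m := fun k => monomial t (1 : K) * u k

/-- Multiplication of a module element by a polynomial. -/
def pmul (p : MvPolynomial (Fin n) K) (u : ModElem K n m) : ModElem K n m := fun k => p * u k

/-- The `j`-th standard basis vector `e_j` of `R^m`. -/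
def eVec (j : Fin m) : ModElem K n m := fun k => if k = j then 1 else 0

/-- The module element `c · x^α · e_j`. -/
def termVec (α : PP n) (c : K) (j : Fin m) : ModElem K n m :=
  fun k => if k = j then monomial α c else 0

/-- `G = {g₁^[v₁], …, g_s^[v_s]}` is a full-labeled Gröbner basis for `I = ⟨F⟩`:
each `gᵢ = vᵢ · F`, and for every labeled polynomial `f^[u]` of `I` with `f ≠ 0`
there is `i` with `lpp(gᵢ) ∣ lpp(f)` and `lpp(t·vᵢ) ⪯ lpp(u)`, `t = lpp(f)/lpp(gᵢ)`. -/
def IsFullLGB (o1 : MonOrd n) (o2 : ModOrd n m) (F : Fin m → MvPolynomial (Fin n) K)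
    {s : ℕ} (g : Fin s → MvPolynomial (Fin n) K) (v : Fin s → ModElem K n m) : Prop :=
  (∀ i, g i = dotF (v i) F) ∧
  ∀ (f : MvPolynomial (Fin n) K) (u : ModElem K n m), f = dotF u F → f ≠ 0 →
    ∃ i, g i ≠ 0 ∧ lpp o1 (g i) ≤ lpp o1 f ∧
      wbleM o2 (lppMW o2 (smulPP (lpp o1 f - lpp o1 (g i)) (v i))) (lppMW o2 u)

/-- `S = {g₁^(t₁), …, g_s^(t_s)}` is a signature-labeled Gröbner basis for `I = ⟨F⟩`. -/
def IsSigLGB (o1 : MonOrd n) (o2 : ModOrd n m) (F : Fin m → MvPolynomial (Fin n) K)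
    {s : ℕ} (g : Fin s → MvPolynomial (Fin n) K) (t : Fin s → MTerm n m) : Prop :=
  ∃ v : Fin s → ModElem K n m, (∀ i, lppMW o2 (v i) = (t i : WithBot (MTerm n m))) ∧
    IsFullLGB o1 o2 F g v

/-- `g^[v]` is a standard form of the module term `T` in `I = ⟨F⟩`. -/
def IsStdForm (o1 : MonOrd n) (o2 : ModOrd n m) (F : Fin m → MvPolynomial (Fin n) K)
    (T : MTerm n m) (g : MvPolynomial (Fin n) K) (v : ModElem K n m) : Prop :=
  g = dotF v F ∧ lppMW o2 v = (T : WithBot (MTerm n m)) ∧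
  ∀ (f : MvPolynomial (Fin n) K) (u : ModElem K n m), f = dotF u F →
    lppMW o2 u = (T : WithBot (MTerm n m)) → wbleP o1 (lppW o1 g) (lppW o1 f)

/-- `≺₂` is the position-over-term extension of `≺₁`:
`x^α eᵢ ≺₂ x^β e_j` iff `i > j`, or `i = j` and `x^α ≺₁ x^β`. -/
def IsPOT (o1 : MonOrd n) (o2 : ModOrd n m) : Prop :=
  ∀ a b : MTerm n m, o2.ord.lt a b ↔ (b.2 < a.2 ∨ (a.2 = b.2 ∧ o1.ord.lt a.1 b.1))

/-- `f^(T)` is an admissible labeled polynomial: some `u` satisfies `f = u·F`, `lpp(u) = T`. -/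
def Admissible (o2 : ModOrd n m) (F : Fin m → MvPolynomial (Fin n) K)
    (f : MvPolynomial (Fin n) K) (T : MTerm n m) : Prop :=
  ∃ u : ModElem K n m, f = dotF u F ∧ lppMW o2 u = (T : WithBot (MTerm n m))

/-- `r` is a strict total order on the set `B` (`r p q` read: `p` was added later than `q`). -/
def StrictTotalOn {X : Type*} (B : Set X) (r : X → X → Prop) : Prop :=
  (∀ p ∈ B, ¬ r p p) ∧
  (∀ p ∈ B, ∀ q ∈ B, ∀ w ∈ B, r p q → r q w → r p w) ∧
  (∀ p ∈ B, ∀ q ∈ B, p ≠ q → r p q ∨ r q p)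

/-- `tf o1 f g = lcm(lpp f, lpp g) / lpp f`. -/
def tf (o1 : MonOrd n) (f g : MvPolynomial (Fin n) K) : PP n :=
  (lpp o1 f ⊔ lpp o1 g) - lpp o1 f

/-- `f^[u]` has a standard representation w.r.t. the set `B` of labeled polynomials. -/
def HasStdRep (o1 : MonOrd n) (o2 : ModOrd n m)
    (B : Set (MvPolynomial (Fin n) K × ModElem K n m))
    (f : MvPolynomial (Fin n) K) (u : ModElem K n m) : Prop :=
  ∃ (s : ℕ) (p : Fin s → MvPolynomial (Fin n) K)
      (q : Fin s → MvPolynomial (Fin n) K × ModElem K n m),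
    (∀ i, q i ∈ B) ∧ f = ∑ i, p i * (q i).1 ∧
    (∀ i, wbleP o1 (lppW o1 (p i * (q i).1)) (lppW o1 f)) ∧
    (∀ i, wbleM o2 (lppMW o2 (pmul (p i) ((q i).2))) (lppMW o2 u))

/-- `(t_p, p, t_q, q)` is a critical pair of labeled polynomials. -/
def IsCritPairL (o1 : MonOrd n) (o2 : ModOrd n m)
    (later : (MvPolynomial (Fin n) K × ModElem K n m) →
      (MvPolynomial (Fin n) K × ModElem K n m) → Prop)
    (p q : MvPolynomial (Fin n) K × ModElem K n m) : Prop :=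
  p.1 ≠ 0 ∧ q.1 ≠ 0 ∧
  (wbltM o2 (lppMW o2 (smulPP (tf o1 q.1 p.1) q.2)) (lppMW o2 (smulPP (tf o1 p.1 q.1) p.2)) ∨
   (lppMW o2 (smulPP (tf o1 p.1 q.1) p.2) = lppMW o2 (smulPP (tf o1 q.1 p.1) q.2) ∧ later q p))

/-- Polynomial part of the S-polynomial of a critical pair of labeled polynomials. -/
def sPolyF (o1 : MonOrd n) (p q : MvPolynomial (Fin n) K × ModElem K n m) :
    MvPolynomial (Fin n) K :=
  monomial (tf o1 p.1 q.1) (1 : K) * p.1 -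
    monomial (tf o1 q.1 p.1) (lc o1 p.1 / lc o1 q.1) * q.1

/-- Label part of the S-polynomial of a critical pair of labeled polynomials. -/
def sPolyU (o1 : MonOrd n) (p q : MvPolynomial (Fin n) K × ModElem K n m) : ModElem K n m :=
  fun k => monomial (tf o1 p.1 q.1) (1 : K) * p.2 k -
    monomial (tf o1 q.1 p.1) (lc o1 p.1 / lc o1 q.1) * q.2 k

/-- `t·p` (labeled version) is F5-divisible by `B`. -/
def F5DivL (o1 : MonOrd n) (o2 : ModOrd n m)
    (B : Set (MvPolynomial (Fin n) K × ModElem K n m)) (t : PP n)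
    (p : MvPolynomial (Fin n) K × ModElem K n m) : Prop :=
  ∃ (α : PP n) (i : Fin m), lppMW o2 p.2 = (((α, i) : MTerm n m) : WithBot (MTerm n m)) ∧
    ∃ q ∈ B, q.1 ≠ 0 ∧ ∃ (β : PP n) (j : Fin m),
      lppMW o2 q.2 = (((β, j) : MTerm n m) : WithBot (MTerm n m)) ∧
      lpp o1 q.1 ≤ t + α ∧ o2.ord.lt (((0 : PP n), j) : MTerm n m) (((0 : PP n), i) : MTerm n m)

/-- `t·p` (labeled version) is F5-rewritable by `B`. -/
def F5RewL (o2 : ModOrd n m)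
    (later : (MvPolynomial (Fin n) K × ModElem K n m) →
      (MvPolynomial (Fin n) K × ModElem K n m) → Prop)
    (B : Set (MvPolynomial (Fin n) K × ModElem K n m)) (t : PP n)
    (p : MvPolynomial (Fin n) K × ModElem K n m) : Prop :=
  ∃ q ∈ B, (∃ a b : MTerm n m, lppMW o2 q.2 = (a : WithBot (MTerm n m)) ∧
    lppMW o2 (smulPP t p.2) = (b : WithBot (MTerm n m)) ∧ a.2 = b.2 ∧ a.1 ≤ b.1) ∧ later q p

/-- A set `G` of labeled polynomials is a full-labeled Gröbner basis for `I = ⟨F⟩`. -/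
def IsFullLGBSet (o1 : MonOrd n) (o2 : ModOrd n m) (F : Fin m → MvPolynomial (Fin n) K)
    (G : Set (MvPolynomial (Fin n) K × ModElem K n m)) : Prop :=
  (∀ p ∈ G, p.1 = dotF p.2 F) ∧
  ∀ (f : MvPolynomial (Fin n) K) (u : ModElem K n m), f = dotF u F → f ≠ 0 →
    ∃ p ∈ G, p.1 ≠ 0 ∧ lpp o1 p.1 ≤ lpp o1 f ∧
      wbleM o2 (lppMW o2 (smulPP (lpp o1 f - lpp o1 p.1) p.2)) (lppMW o2 u)

/-- `t·p` (signature version, `p = f^(x^α eᵢ)`) is F5-divisible by `B`. -/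
def F5DivS (o1 : MonOrd n) (o2 : ModOrd n m)
    (B : Set (MvPolynomial (Fin n) K × MTerm n m)) (t : PP n)
    (p : MvPolynomial (Fin n) K × MTerm n m) : Prop :=
  ∃ q ∈ B, q.1 ≠ 0 ∧ lpp o1 q.1 ≤ t + p.2.1 ∧
    o2.ord.lt (((0 : PP n), q.2.2) : MTerm n m) (((0 : PP n), p.2.2) : MTerm n m)

/-- `t·p` (signature version) is F5-rewritable by `B`. -/
def F5RewS
    (later : (MvPolynomial (Fin n) K × MTerm n m) →
      (MvPolynomial (Fin n) K × MTerm n m) → Prop)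
    (B : Set (MvPolynomial (Fin n) K × MTerm n m)) (t : PP n)
    (p : MvPolynomial (Fin n) K × MTerm n m) : Prop :=
  ∃ q ∈ B, q.2.2 = p.2.2 ∧ q.2.1 ≤ t + p.2.1 ∧ later q p

/-- `(t_p, p, t_q, q)` is a critical pair (signature version). -/
def IsCritPairS (o1 : MonOrd n) (o2 : ModOrd n m)
    (later : (MvPolynomial (Fin n) K × MTerm n m) →
      (MvPolynomial (Fin n) K × MTerm n m) → Prop)
    (p q : MvPolynomial (Fin n) K × MTerm n m) : Prop :=
  p.1 ≠ 0 ∧ q.1 ≠ 0 ∧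
  (o2.ord.lt (mtmul (tf o1 q.1 p.1) q.2) (mtmul (tf o1 p.1 q.1) p.2) ∨
   (mtmul (tf o1 p.1 q.1) p.2 = mtmul (tf o1 q.1 p.1) q.2 ∧ later q p))

/-- A finite set `S` of pairs `(g, t)` is a signature-labeled Gröbner basis for `I = ⟨F⟩`. -/
def IsSigLGBSet (o1 : MonOrd n) (o2 : ModOrd n m) (F : Fin m → MvPolynomial (Fin n) K)
    (S : Set (MvPolynomial (Fin n) K × MTerm n m)) : Prop :=
  S.Finite ∧ ∃ V : MvPolynomial (Fin n) K × MTerm n m → ModElem K n m,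
    (∀ p ∈ S, lppMW o2 (V p) = (p.2 : WithBot (MTerm n m))) ∧
    IsFullLGBSet o1 o2 F ((fun p => (p.1, V p)) '' S)

end
noncomputable section Aux
namespace Stmt12
open MvPolynomial

variable {K : Type*} [Field K] {n m : ℕ}

/-! ### PP arithmetic -/

lemma pp_add_sub (a b : PP n) : a + b - b = a := by
  ext x; simp [Finsupp.tsub_apply]

lemma pp_sub_add {a b : PP n} (h : b ≤ a) : a - b + b = a := by
  ext x; have := (Finsupp.le_def.mp h) x; simp [Finsupp.tsub_apply]; omega

lemma pp_sub_add_sub {a b c : PP n} (h1 : b ≤ a) (h2 : c ≤ b) : a - b + (b - c) = a - c := by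
  ext x
  have h1x := (Finsupp.le_def.mp h1) x
  have h2x := (Finsupp.le_def.mp h2) x
  simp [Finsupp.tsub_apply]; omega

/-! ### o1 order basics -/

lemma leP_add_right (o1 : MonOrd n) {a b : PP n} (γ : PP n) (h : o1.ord.le a b) :
    o1.ord.le (γ + a) (γ + b) := by
  rcases @lt_or_eq_of_le _ o1.ord.toPartialOrder _ _ h with h' | h'
  · exact @le_of_lt _ o1.ord.toPreorder _ _ (o1.mul_lt γ a b h')
  · exact h' ▸ o1.ord.le_refl _

lemma leP_add (o1 : MonOrd n) {a b a' b' : PP n} (h : o1.ord.le a a') (h' : o1.ord.le b b') :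
    o1.ord.le (a + b) (a' + b') := by
  refine @le_trans _ o1.ord.toPreorder _ _ _ (leP_add_right o1 a h') ?_
  rw [add_comm a b', add_comm a' b']
  exact leP_add_right o1 b' h

lemma ltP_add_le (o1 : MonOrd n) {a b a' b' : PP n} (h : o1.ord.lt a a') (h' : o1.ord.le b b') :
    o1.ord.lt (a + b) (a' + b') := by
  have h1 : o1.ord.le (a + b) (a + b') := leP_add_right o1 a h'
  have h2 : o1.ord.lt (a + b') (a' + b') := by
    rw [add_comm a b', add_comm a' b']; exact o1.mul_lt b' a a' h
  exact @lt_of_le_of_lt _ o1.ord.toPreorder _ _ _ h1 h2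

/-- pointwise `≤` implies `⪯₁`. -/
lemma leP_of_le (o1 : MonOrd n) {a b : PP n} (h : a ≤ b) : o1.ord.le a b := by
  have hb : b = a + (b - a) := by
    ext x; have := (Finsupp.le_def.mp h) x; simp [Finsupp.tsub_apply]; omega
  have h2 := leP_add_right o1 a (o1.one_le (b - a))
  rw [add_zero] at h2
  exact hb ▸ h2

/-! ### lppW / lpp / lc basics -/

variable (o1 : MonOrd n)

lemma wbleP_coe_coe {a b : PP n} : wbleP o1 (a : WithBot (PP n)) b ↔ o1.ord.le a b :=
  @WithBot.coe_le_coe _ a b o1.ord.toLE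

lemma wbltP_coe_coe {a b : PP n} : wbltP o1 (a : WithBot (PP n)) b ↔ o1.ord.lt a b :=
  @WithBot.coe_lt_coe _ a b o1.ord.toLT

lemma wbleP_refl (a : WithBot (PP n)) : wbleP o1 a a := @le_refl _ (@WithBot.instPreorder _ o1.ord.toPreorder) a

lemma wbleP_trans {a b c : WithBot (PP n)} (h1 : wbleP o1 a b) (h2 : wbleP o1 b c) : wbleP o1 a c :=
  @le_trans _ (@WithBot.instPreorder _ o1.ord.toPreorder) _ _ _ h1 h2

lemma wbleP_bot (a : WithBot (PP n)) : wbleP o1 ⊥ a := @bot_le _ (@WithBot.instLE _ o1.ord.toLE) (@WithBot.instOrderBot _ o1.ord.toLE) a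

lemma wbltP_of_le_of_lt {a b c : WithBot (PP n)} (h1 : wbleP o1 a b) (h2 : wbltP o1 b c) : wbltP o1 a c :=
  @lt_of_le_of_lt _ (@WithBot.instPreorder _ o1.ord.toPreorder) _ _ _ h1 h2

lemma wbltP_of_lt_of_le {a b c : WithBot (PP n)} (h1 : wbltP o1 a b) (h2 : wbleP o1 b c) : wbltP o1 a c :=
  @lt_of_lt_of_le _ (@WithBot.instPreorder _ o1.ord.toPreorder) _ _ _ h1 h2

lemma wbleP_of_lt {a b : WithBot (PP n)} (h : wbltP o1 a b) : wbleP o1 a b :=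
  @le_of_lt _ (@WithBot.instPreorder _ o1.ord.toPreorder) _ _ h

lemma lppW_eq_bot_iff (f : MvPolynomial (Fin n) K) : lppW o1 f = ⊥ ↔ f = 0 := by
  rw [lppW, @Finset.max_eq_bot _ o1.ord, MvPolynomial.support_eq_empty]

lemma lppW_coe {f : MvPolynomial (Fin n) K} (hf : f ≠ 0) : lppW o1 f = ↑(lpp o1 f) := by
  have h : lppW o1 f ≠ ⊥ := fun h => hf ((lppW_eq_bot_iff o1 f).mp h)
  rcases Option.ne_none_iff_exists'.mp h with ⟨a, ha⟩
  rw [lpp, ha]; rfl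

lemma lpp_mem {f : MvPolynomial (Fin n) K} (hf : f ≠ 0) : lpp o1 f ∈ f.support :=
  @Finset.mem_of_max _ o1.ord _ _ (lppW_coe o1 hf)

lemma lc_ne_zero {f : MvPolynomial (Fin n) K} (hf : f ≠ 0) : lc o1 f ≠ 0 :=
  MvPolynomial.mem_support_iff.mp (lpp_mem o1 hf)

lemma le_lppW {f : MvPolynomial (Fin n) K} {β : PP n} (h : β ∈ f.support) :
    wbleP o1 ↑β (lppW o1 f) := @Finset.le_max _ o1.ord _ _ h

lemma lppW_le_iff {f : MvPolynomial (Fin n) K} {c : WithBot (PP n)} :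
    wbleP o1 (lppW o1 f) c ↔ ∀ β ∈ f.support, wbleP o1 ↑β c := @Finset.max_le_iff _ o1.ord _ _

lemma lppW_lt_coe_iff {f : MvPolynomial (Fin n) K} {d : PP n} :
    wbltP o1 (lppW o1 f) ↑d ↔ ∀ β ∈ f.support, o1.ord.lt β d := by
  constructor
  · intro h β hβ
    exact (wbltP_coe_coe o1).mp (wbltP_of_le_of_lt o1 (le_lppW o1 hβ) h)
  · intro h
    rcases eq_or_ne f 0 with rfl | hf
    · rw [(lppW_eq_bot_iff o1 0).mpr rfl]
      exact (@WithBot.bot_lt_coe _ o1.ord.toLT d : _)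
    · rw [lppW_coe o1 hf]
      exact (wbltP_coe_coe o1).mpr (h _ (lpp_mem o1 hf))

lemma coeff_eq_zero_of_lppW_lt {f : MvPolynomial (Fin n) K} {d : PP n}
    (h : wbltP o1 (lppW o1 f) ↑d) : f.coeff d = 0 := by
  by_contra hc
  have hd : d ∈ f.support := MvPolynomial.mem_support_iff.mpr hc
  exact (@lt_irrefl _ o1.ord.toPreorder d) ((lppW_lt_coe_iff o1).mp h d hd)

lemma lppW_le_of_support {f : MvPolynomial (Fin n) K} {c : WithBot (PP n)}
    (h : ∀ β ∈ f.support, wbleP o1 ↑β c) : wbleP o1 (lppW o1 f) c := (lppW_le_iff o1).mpr h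

lemma lppW_add_le {f g : MvPolynomial (Fin n) K} {c : WithBot (PP n)}
    (hf : wbleP o1 (lppW o1 f) c) (hg : wbleP o1 (lppW o1 g) c) :
    wbleP o1 (lppW o1 (f + g)) c := by
  refine lppW_le_of_support o1 fun β hβ => ?_
  rcases Finset.mem_union.mp (MvPolynomial.support_add hβ) with h | h
  · exact wbleP_trans o1 (le_lppW o1 h) hf
  · exact wbleP_trans o1 (le_lppW o1 h) hg

lemma lppW_sum_le {ι : Type*} {s : Finset ι} {h : ι → MvPolynomial (Fin n) K} {c : WithBot (PP n)}
    (hb : ∀ i ∈ s, wbleP o1 (lppW o1 (h i)) c) : wbleP o1 (lppW o1 (∑ i ∈ s, h i)) c := by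
  classical
  induction s using Finset.induction_on with
  | empty => simpa [lppW] using wbleP_bot o1 c
  | insert _ _ hx ih =>
    rw [Finset.sum_insert hx]
    exact lppW_add_le o1 (hb _ (Finset.mem_insert_self _ _))
      (ih fun i hi => hb i (Finset.mem_insert_of_mem hi))

lemma lppW_neg {f : MvPolynomial (Fin n) K} : lppW o1 (-f) = lppW o1 f := by
  rw [lppW, lppW, MvPolynomial.support_neg]
/-! ### multiplication -/

lemma exists_support_add {f g : MvPolynomial (Fin n) K} {β : PP n} (h : β ∈ (f * g).support) :
    ∃ a ∈ f.support, ∃ b ∈ g.support, a + b = β := by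
  classical
  have := MvPolynomial.support_mul f g h
  rcases Finset.mem_add.mp this with ⟨a, ha, b, hb, hab⟩
  exact ⟨a, ha, b, hb, hab⟩

lemma lppW_mul_le {f g : MvPolynomial (Fin n) K} {a b : PP n}
    (hf : wbleP o1 (lppW o1 f) ↑a) (hg : wbleP o1 (lppW o1 g) ↑b) :
    wbleP o1 (lppW o1 (f * g)) ↑(a + b) := by
  refine lppW_le_of_support o1 fun β hβ => ?_
  rcases exists_support_add hβ with ⟨x, hx, y, hy, hxy⟩
  have h1 : o1.ord.le x a := (wbleP_coe_coe o1).mp (wbleP_trans o1 (le_lppW o1 hx) hf)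
  have h2 : o1.ord.le y b := (wbleP_coe_coe o1).mp (wbleP_trans o1 (le_lppW o1 hy) hg)
  exact hxy ▸ (wbleP_coe_coe o1).mpr (leP_add o1 h1 h2)

lemma lppW_mul_lt {f g : MvPolynomial (Fin n) K} {a b : PP n}
    (hf : wbltP o1 (lppW o1 f) ↑a) (hg : wbleP o1 (lppW o1 g) ↑b) :
    wbltP o1 (lppW o1 (f * g)) ↑(a + b) := by
  refine (lppW_lt_coe_iff o1).mpr fun β hβ => ?_
  rcases exists_support_add hβ with ⟨x, hx, y, hy, hxy⟩
  have h1 : o1.ord.lt x a := (lppW_lt_coe_iff o1).mp hf x hx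
  have h2 : o1.ord.le y b := (wbleP_coe_coe o1).mp (wbleP_trans o1 (le_lppW o1 hy) hg)
  exact hxy ▸ ltP_add_le o1 h1 h2

lemma coeff_mul_lpp {f g : MvPolynomial (Fin n) K} (hf : f ≠ 0) (hg : g ≠ 0) :
    (f * g).coeff (lpp o1 f + lpp o1 g) = lc o1 f * lc o1 g := by
  classical
  rw [MvPolynomial.coeff_mul]
  have hside : ∀ b ∈ Finset.HasAntidiagonal.antidiagonal (lpp o1 f + lpp o1 g),
      b ≠ (lpp o1 f, lpp o1 g) → f.coeff b.1 * g.coeff b.2 = 0 := by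
    rintro ⟨x, y⟩ hxy hne
    have hsum : x + y = lpp o1 f + lpp o1 g := Finset.HasAntidiagonal.mem_antidiagonal.mp hxy
    by_contra hc
    have hx : x ∈ f.support := by
      by_contra h; exact hc (by simp [MvPolynomial.notMem_support_iff.mp h])
    have hy : y ∈ g.support := by
      by_contra h; exact hc (by simp [MvPolynomial.notMem_support_iff.mp h])
    have h1 : o1.ord.le x (lpp o1 f) := by
      have := wbleP_trans o1 (le_lppW o1 hx) (by rw [lppW_coe o1 hf]; exact wbleP_refl o1 _)
      exact (wbleP_coe_coe o1).mp this
    have h2 : o1.ord.le y (lpp o1 g) := by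
      have := wbleP_trans o1 (le_lppW o1 hy) (by rw [lppW_coe o1 hg]; exact wbleP_refl o1 _)
      exact (wbleP_coe_coe o1).mp this
    have hxe : x = lpp o1 f := by
      by_contra hxe
      have hlt : o1.ord.lt x (lpp o1 f) := @lt_of_le_of_ne _ o1.ord.toPartialOrder _ _ h1 hxe
      have := ltP_add_le o1 hlt h2
      rw [hsum] at this
      exact (@lt_irrefl _ o1.ord.toPreorder _) this
    subst hxe
    exact hne (Prod.ext rfl (add_left_cancel hsum))
  rw [Finset.sum_eq_single_of_mem (lpp o1 f, lpp o1 g)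
    (Finset.HasAntidiagonal.mem_antidiagonal.mpr rfl) hside]
  rfl

lemma lppW_mul {f g : MvPolynomial (Fin n) K} (hf : f ≠ 0) (hg : g ≠ 0) :
    lppW o1 (f * g) = ↑(lpp o1 f + lpp o1 g) := by
  refine @le_antisymm _ (@WithBot.instPartialOrder _ o1.ord.toPartialOrder) _ _ ?_ ?_
  · exact lppW_mul_le o1 (by rw [lppW_coe o1 hf]; exact wbleP_refl o1 _)
      (by rw [lppW_coe o1 hg]; exact wbleP_refl o1 _)
  · refine le_lppW o1 (MvPolynomial.mem_support_iff.mpr ?_)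
    rw [coeff_mul_lpp o1 hf hg]
    exact mul_ne_zero (lc_ne_zero o1 hf) (lc_ne_zero o1 hg)

lemma lpp_mul {f g : MvPolynomial (Fin n) K} (hf : f ≠ 0) (hg : g ≠ 0) :
    lpp o1 (f * g) = lpp o1 f + lpp o1 g := by
  have h := lppW_mul o1 hf hg
  have : lppW o1 (f * g) = ↑(lpp o1 (f * g)) := lppW_coe o1 (mul_ne_zero hf hg)
  rw [this] at h
  exact WithBot.coe_injective h

lemma lppW_monomial_mul_le {γ : PP n} {c : K} {h : MvPolynomial (Fin n) K} {β : PP n}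
    (hh : wbleP o1 (lppW o1 h) ↑β) :
    wbleP o1 (lppW o1 ((monomial γ c : MvPolynomial (Fin n) K) * h)) ↑(γ + β) := by
  refine lppW_le_of_support o1 fun δ hδ => ?_
  rcases exists_support_add hδ with ⟨x, hx, y, hy, hxy⟩
  have hxγ : x = γ := by
    have := MvPolynomial.support_monomial_subset hx
    simpa using this
  subst hxγ
  have h2 : o1.ord.le y β := (wbleP_coe_coe o1).mp (wbleP_trans o1 (le_lppW o1 hy) hh)
  exact hxy ▸ (wbleP_coe_coe o1).mpr (leP_add o1 (o1.ord.le_refl _) h2)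

lemma lppW_monomial_mul_lt {γ : PP n} {c : K} {h : MvPolynomial (Fin n) K} {β : PP n}
    (hh : wbltP o1 (lppW o1 h) ↑β) :
    wbltP o1 (lppW o1 ((monomial γ c : MvPolynomial (Fin n) K) * h)) ↑(γ + β) := by
  refine (lppW_lt_coe_iff o1).mpr fun δ hδ => ?_
  rcases exists_support_add hδ with ⟨x, hx, y, hy, hxy⟩
  have hxγ : x = γ := by
    have := MvPolynomial.support_monomial_subset hx
    simpa using this
  subst hxγ
  have h2 : o1.ord.lt y β := (lppW_lt_coe_iff o1).mp hh y hy
  rw [← hxy]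
  exact o1.mul_lt _ _ _ h2

lemma lppW_sub_lead {f : MvPolynomial (Fin n) K} (hf : f ≠ 0) :
    wbltP o1 (lppW o1 (f - monomial (lpp o1 f) (lc o1 f))) ↑(lpp o1 f) := by
  refine (lppW_lt_coe_iff o1).mpr fun β hβ => ?_
  have hcoeff : (f - monomial (lpp o1 f) (lc o1 f)).coeff β ≠ 0 :=
    MvPolynomial.mem_support_iff.mp hβ
  rcases eq_or_ne β (lpp o1 f) with rfl | hne
  · exfalso
    apply hcoeff
    simp [MvPolynomial.coeff_sub, MvPolynomial.coeff_monomial, lc]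
  · have hβf : β ∈ f.support := by
      refine MvPolynomial.mem_support_iff.mpr fun h0 => hcoeff ?_
      simp [MvPolynomial.coeff_sub, MvPolynomial.coeff_monomial, h0, Ne.symm hne]
    have hle := (wbleP_coe_coe o1).mp
      (wbleP_trans o1 (le_lppW o1 hβf) (by rw [lppW_coe o1 hf]; exact wbleP_refl o1 _))
    exact @lt_of_le_of_ne _ o1.ord.toPartialOrder _ _ hle hne
/-! ### module side -/

variable (o2 : ModOrd n m)

lemma wbleM_refl (a : WithBot (MTerm n m)) : wbleM o2 a a :=
  @le_refl _ (@WithBot.instPreorder _ o2.ord.toPreorder) a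

lemma wbleM_trans {a b c : WithBot (MTerm n m)} (h1 : wbleM o2 a b) (h2 : wbleM o2 b c) :
    wbleM o2 a c := @le_trans _ (@WithBot.instPreorder _ o2.ord.toPreorder) _ _ _ h1 h2

lemma wbleM_bot (a : WithBot (MTerm n m)) : wbleM o2 ⊥ a :=
  @bot_le _ (@WithBot.instLE _ o2.ord.toLE) (@WithBot.instOrderBot _ o2.ord.toLE) a

lemma wbleM_coe_coe {a b : MTerm n m} : wbleM o2 (a : WithBot (MTerm n m)) b ↔ o2.ord.le a b :=
  @WithBot.coe_le_coe _ a b o2.ord.toLE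

lemma mem_msupport {u : ModElem K n m} {t : MTerm n m} :
    t ∈ msupport u ↔ t.1 ∈ (u t.2).support := by
  obtain ⟨β, j⟩ := t
  simp only [msupport, Finset.mem_biUnion, Finset.mem_image, Finset.mem_univ, true_and]
  constructor
  · rintro ⟨i, α, hα, heq⟩
    obtain ⟨h1, h2⟩ := Prod.mk.injEq .. ▸ heq
    exact h1 ▸ h2 ▸ hα
  · intro h
    exact ⟨j, β, h, rfl⟩

lemma mem_msupport_iff_mcoeff {u : ModElem K n m} {t : MTerm n m} :
    t ∈ msupport u ↔ mcoeff u t ≠ 0 := by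
  rw [mem_msupport, mcoeff, MvPolynomial.mem_support_iff]

lemma le_lppMW {u : ModElem K n m} {t : MTerm n m} (h : t ∈ msupport u) :
    wbleM o2 ↑t (lppMW o2 u) := @Finset.le_max _ o2.ord _ _ h

lemma lppMW_le_iff {u : ModElem K n m} {c : WithBot (MTerm n m)} :
    wbleM o2 (lppMW o2 u) c ↔ ∀ t ∈ msupport u, wbleM o2 ↑t c :=
  @Finset.max_le_iff _ o2.ord _ _

lemma lppMW_le_of_subset {u v : ModElem K n m} (h : msupport u ⊆ msupport v) :
    wbleM o2 (lppMW o2 u) (lppMW o2 v) :=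
  (lppMW_le_iff o2).mpr fun t ht => le_lppMW o2 (h ht)

lemma lppMW_eq_bot_iff {u : ModElem K n m} : lppMW o2 u = ⊥ ↔ msupport u = ∅ :=
  @Finset.max_eq_bot _ o2.ord _

lemma u_eq_zero_of_msupport {u : ModElem K n m} (h : msupport u = ∅) : u = 0 := by
  funext k
  ext β
  have : ((β, k) : MTerm n m) ∉ msupport u := h ▸ Finset.notMem_empty _
  rw [mem_msupport_iff_mcoeff, not_not] at this
  simpa [mcoeff] using this

lemma lppMW_add_le {u v : ModElem K n m} {c : WithBot (MTerm n m)}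
    (hu : wbleM o2 (lppMW o2 u) c) (hv : wbleM o2 (lppMW o2 v) c) :
    wbleM o2 (lppMW o2 (u + v)) c := by
  refine (lppMW_le_iff o2).mpr fun t ht => ?_
  have hc : mcoeff (u + v) t ≠ 0 := mem_msupport_iff_mcoeff.mp ht
  have : mcoeff u t ≠ 0 ∨ mcoeff v t ≠ 0 := by
    by_contra hcon
    push_neg at hcon
    have h1 : (u t.2).coeff t.1 = 0 := hcon.1
    have h2 : (v t.2).coeff t.1 = 0 := hcon.2
    exact hc (by simp [mcoeff, Pi.add_apply, MvPolynomial.coeff_add, h1, h2])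
  rcases this with h | h
  · exact wbleM_trans o2 (le_lppMW o2 (mem_msupport_iff_mcoeff.mpr h)) hu
  · exact wbleM_trans o2 (le_lppMW o2 (mem_msupport_iff_mcoeff.mpr h)) hv

lemma lppMW_fun_sub_le {A B : ModElem K n m} {c : WithBot (MTerm n m)}
    (hu : wbleM o2 (lppMW o2 A) c) (hv : wbleM o2 (lppMW o2 B) c) :
    wbleM o2 (lppMW o2 (fun j => A j - B j)) c := by
  refine (lppMW_le_iff o2).mpr fun t ht => ?_
  have hc : mcoeff (fun j => A j - B j) t ≠ 0 := mem_msupport_iff_mcoeff.mp ht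
  have : mcoeff A t ≠ 0 ∨ mcoeff B t ≠ 0 := by
    by_contra hcon
    push_neg at hcon
    have h1 : (A t.2).coeff t.1 = 0 := hcon.1
    have h2 : (B t.2).coeff t.1 = 0 := hcon.2
    exact hc (by simp [mcoeff, MvPolynomial.coeff_sub, h1, h2])
  rcases this with h | h
  · exact wbleM_trans o2 (le_lppMW o2 (mem_msupport_iff_mcoeff.mpr h)) hu
  · exact wbleM_trans o2 (le_lppMW o2 (mem_msupport_iff_mcoeff.mpr h)) hv

lemma lppMW_sum_le {ι : Type*} {s : Finset ι} {w : ι → ModElem K n m} {c : WithBot (MTerm n m)}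
    (hb : ∀ i ∈ s, wbleM o2 (lppMW o2 (w i)) c) : wbleM o2 (lppMW o2 (∑ i ∈ s, w i)) c := by
  classical
  induction s using Finset.induction_on with
  | empty =>
    have : lppMW o2 (K := K) (∑ i ∈ (∅ : Finset ι), w i) = ⊥ := by
      rw [lppMW_eq_bot_iff]
      ext t
      simp [msupport]
    rw [this]
    exact wbleM_bot o2 c
  | insert _ _ hx ih =>
    rw [Finset.sum_insert hx]
    exact lppMW_add_le o2 (hb _ (Finset.mem_insert_self _ _))
      (ih fun i hi => hb i (Finset.mem_insert_of_mem hi))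

lemma lppMW_neg {w : ModElem K n m} : lppMW o2 (fun k => -(w k)) = lppMW o2 w := by
  have : msupport (fun k => -(w k) : ModElem K n m) = msupport w := by
    ext t
    rw [mem_msupport, mem_msupport]
    show t.1 ∈ (-(w t.2)).support ↔ _
    rw [MvPolynomial.support_neg]
  rw [lppMW, lppMW, this]

/-! ### mtmul monotonicity -/

lemma mtmul_le_right {S T : MTerm n m} (γ : PP n) (h : o2.ord.le S T) :
    o2.ord.le (mtmul γ S) (mtmul γ T) := by
  rcases @lt_or_eq_of_le _ o2.ord.toPartialOrder _ _ h with h' | h'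
  · exact @le_of_lt _ o2.ord.toPreorder _ _ (o2.mul_lt γ S T h')
  · exact h' ▸ o2.ord.le_refl _

variable (o1 : MonOrd n) in
lemma mtmul_le_left (hpot : IsPOT o1 o2) {a b : PP n} (T : MTerm n m) (h : o1.ord.le a b) :
    o2.ord.le (mtmul a T) (mtmul b T) := by
  rcases @lt_or_eq_of_le _ o1.ord.toPartialOrder _ _ h with h' | h'
  · refine @le_of_lt _ o2.ord.toPreorder _ _ ((hpot _ _).mpr (Or.inr ⟨rfl, ?_⟩))
    show o1.ord.lt (a + T.1) (b + T.1)
    rw [add_comm a T.1, add_comm b T.1]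
    exact o1.mul_lt T.1 a b h'
  · exact h' ▸ o2.ord.le_refl _

lemma wbleM_map_mtmul {γ : PP n} {a b : WithBot (MTerm n m)} (h : wbleM o2 a b) :
    wbleM o2 (WithBot.map (mtmul γ) a) (WithBot.map (mtmul γ) b) := by
  cases a with
  | bot => exact wbleM_bot o2 _
  | coe S =>
    cases b with
    | bot =>
      exact absurd h (@WithBot.not_coe_le_bot _ o2.ord.toLE S)
    | coe T =>
      have hST : o2.ord.le S T := (wbleM_coe_coe o2).mp h
      exact (wbleM_coe_coe o2).mpr (mtmul_le_right o2 γ hST)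
/-! ### smulPP and pmul -/

lemma lppMW_smulPP (γ : PP n) (u : ModElem K n m) :
    lppMW o2 (smulPP γ u) = WithBot.map (mtmul γ) (lppMW o2 u) := by
  classical
  refine @le_antisymm _ (@WithBot.instPartialOrder _ o2.ord.toPartialOrder) _ _ ?_ ?_
  · refine (lppMW_le_iff o2).mpr fun t ht => ?_
    have hc : t.1 ∈ ((monomial γ (1 : K)) * u t.2).support := mem_msupport.mp ht
    rcases exists_support_add hc with ⟨x, hx, y, hy, hxy⟩
    have hxγ : x = γ := by simpa using MvPolynomial.support_monomial_subset hx
    subst hxγ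
    have hmem : ((y, t.2) : MTerm n m) ∈ msupport u := mem_msupport.mpr hy
    have hle : wbleM o2 ↑((y, t.2) : MTerm n m) (lppMW o2 u) := le_lppMW o2 hmem
    cases hW : lppMW o2 u with
    | bot => rw [hW] at hle; exact absurd hle (@WithBot.not_coe_le_bot _ o2.ord.toLE _)
    | coe T =>
      rw [hW] at hle
      have : o2.ord.le (mtmul x ((y, t.2))) (mtmul x T) :=
        mtmul_le_right o2 x ((wbleM_coe_coe o2).mp hle)
      have ht' : t = mtmul x ((y, t.2)) := by
        rw [mtmul]; exact Prod.ext hxy.symm rfl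
      rw [ht', WithBot.map_coe]
      exact (wbleM_coe_coe o2).mpr this
  · cases hW : lppMW o2 u with
    | bot => exact wbleM_bot o2 _
    | coe T =>
      rw [WithBot.map_coe]
      refine le_lppMW o2 (mem_msupport_iff_mcoeff.mpr ?_)
      have hT : T ∈ msupport u := @Finset.mem_of_max _ o2.ord _ _ hW
      have hcT : mcoeff u T ≠ 0 := mem_msupport_iff_mcoeff.mp hT
      show ((monomial γ (1:K)) * u T.2).coeff (γ + T.1) ≠ 0
      rw [MvPolynomial.coeff_monomial_mul, one_mul]
      exact hcT

lemma lppMW_pmul_monomial_le (γ : PP n) (c : K) (u : ModElem K n m) :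
    wbleM o2 (lppMW o2 (pmul (monomial γ c) u)) (WithBot.map (mtmul γ) (lppMW o2 u)) := by
  refine (lppMW_le_iff o2).mpr fun t ht => ?_
  have hc : t.1 ∈ ((monomial γ c) * u t.2).support := mem_msupport.mp ht
  rcases exists_support_add hc with ⟨x, hx, y, hy, hxy⟩
  have hxγ : x = γ := by simpa using MvPolynomial.support_monomial_subset hx
  subst hxγ
  have hmem : ((y, t.2) : MTerm n m) ∈ msupport u := mem_msupport.mpr hy
  have hle : wbleM o2 ↑((y, t.2) : MTerm n m) (lppMW o2 u) := le_lppMW o2 hmem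
  cases hW : lppMW o2 u with
  | bot => rw [hW] at hle; exact absurd hle (@WithBot.not_coe_le_bot _ o2.ord.toLE _)
  | coe T =>
    rw [hW] at hle
    have hmt : o2.ord.le (mtmul x ((y, t.2))) (mtmul x T) :=
      mtmul_le_right o2 x ((wbleM_coe_coe o2).mp hle)
    have ht' : t = mtmul x ((y, t.2)) := by rw [mtmul]; exact Prod.ext hxy.symm rfl
    rw [ht', WithBot.map_coe]
    exact (wbleM_coe_coe o2).mpr hmt

variable (o1 : MonOrd n)

lemma lppMW_pmul_le (hpot : IsPOT o1 o2) (p : MvPolynomial (Fin n) K) (u : ModElem K n m) :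
    wbleM o2 (lppMW o2 (pmul p u)) (WithBot.map (mtmul (lpp o1 p)) (lppMW o2 u)) := by
  refine (lppMW_le_iff o2).mpr fun t ht => ?_
  have hc : t.1 ∈ (p * u t.2).support := mem_msupport.mp ht
  rcases exists_support_add hc with ⟨x, hx, y, hy, hxy⟩
  have hp : p ≠ 0 := fun h => by simp [h] at hx
  have hxle : o1.ord.le x (lpp o1 p) := by
    have := wbleP_trans o1 (le_lppW o1 hx) (by rw [lppW_coe o1 hp]; exact wbleP_refl o1 _)
    exact (wbleP_coe_coe o1).mp this
  have hmem : ((y, t.2) : MTerm n m) ∈ msupport u := mem_msupport.mpr hy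
  have hle : wbleM o2 ↑((y, t.2) : MTerm n m) (lppMW o2 u) := le_lppMW o2 hmem
  cases hW : lppMW o2 u with
  | bot => rw [hW] at hle; exact absurd hle (@WithBot.not_coe_le_bot _ o2.ord.toLE _)
  | coe T =>
    rw [hW] at hle
    have h1 : o2.ord.le (mtmul x ((y, t.2))) (mtmul x T) :=
      mtmul_le_right o2 x ((wbleM_coe_coe o2).mp hle)
    have h2 : o2.ord.le (mtmul x T) (mtmul (lpp o1 p) T) := mtmul_le_left o2 o1 hpot T hxle
    have ht' : t = mtmul x ((y, t.2)) := by rw [mtmul]; exact Prod.ext hxy.symm rfl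
    rw [ht', WithBot.map_coe]
    exact (wbleM_coe_coe o2).mpr (o2.ord.le_trans _ _ _ h1 h2)

lemma mcoeff_pmul_lpp (hpot : IsPOT o1 o2) {p : MvPolynomial (Fin n) K} {u : ModElem K n m}
    {T : MTerm n m} (hT : lppMW o2 u = ↑T) (hp : p ≠ 0) :
    mcoeff (pmul p u) (mtmul (lpp o1 p) T) = lc o1 p * mcoeff u T := by
  classical
  show (p * u T.2).coeff (lpp o1 p + T.1) = lc o1 p * (u T.2).coeff T.1
  rw [MvPolynomial.coeff_mul]
  have hside : ∀ b ∈ Finset.HasAntidiagonal.antidiagonal (lpp o1 p + T.1),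
      b ≠ (lpp o1 p, T.1) → p.coeff b.1 * (u T.2).coeff b.2 = 0 := by
    rintro ⟨x, y⟩ hxy hne
    have hsum : x + y = lpp o1 p + T.1 := Finset.HasAntidiagonal.mem_antidiagonal.mp hxy
    by_contra hcon
    have hx : x ∈ p.support := by
      by_contra h; exact hcon (by simp [MvPolynomial.notMem_support_iff.mp h])
    have hy : y ∈ (u T.2).support := by
      by_contra h; exact hcon (by simp [MvPolynomial.notMem_support_iff.mp h])
    have hxle : o1.ord.le x (lpp o1 p) := by
      have := wbleP_trans o1 (le_lppW o1 hx) (by rw [lppW_coe o1 hp]; exact wbleP_refl o1 _)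
      exact (wbleP_coe_coe o1).mp this
    have hxeq : x = lpp o1 p := by
      by_contra hxe
      have hxlt : o1.ord.lt x (lpp o1 p) := @lt_of_le_of_ne _ o1.ord.toPartialOrder _ _ hxle hxe
      -- then y ≻₁ T.1
      have hygt : o1.ord.lt T.1 y := by
        by_contra hyle
        have hyle' : o1.ord.le y T.1 := by
          rcases o1.ord.le_total y T.1 with h | h
          · exact h
          · rcases @lt_or_eq_of_le _ o1.ord.toPartialOrder _ _ h with h' | h'
            · exact absurd h' hyle
            · exact h' ▸ o1.ord.le_refl _
        have := ltP_add_le o1 hxlt hyle'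
        rw [hsum] at this
        exact (@lt_irrefl _ o1.ord.toPreorder _) this
      -- (y, T.2) ≻₂ T, contradicting maximality
      have hmem : ((y, T.2) : MTerm n m) ∈ msupport u := mem_msupport.mpr hy
      have hle : wbleM o2 ↑((y, T.2) : MTerm n m) (lppMW o2 u) := le_lppMW o2 hmem
      rw [hT] at hle
      have hle' : o2.ord.le ((y, T.2)) T := (wbleM_coe_coe o2).mp hle
      have hgt : o2.ord.lt T ((y, T.2)) := (hpot _ _).mpr (Or.inr ⟨rfl, hygt⟩)
      exact (@lt_irrefl _ o2.ord.toPreorder T)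
        (@lt_of_lt_of_le _ o2.ord.toPreorder _ _ _ hgt hle')
    subst hxeq
    exact hne (Prod.ext rfl (add_left_cancel hsum))
  rw [Finset.sum_eq_single_of_mem (lpp o1 p, T.1) (Finset.HasAntidiagonal.mem_antidiagonal.mpr rfl) hside]
  rfl

lemma lppMW_pmul (hpot : IsPOT o1 o2) {p : MvPolynomial (Fin n) K} (u : ModElem K n m)
    (hp : p ≠ 0) :
    lppMW o2 (pmul p u) = WithBot.map (mtmul (lpp o1 p)) (lppMW o2 u) := by
  refine @le_antisymm _ (@WithBot.instPartialOrder _ o2.ord.toPartialOrder) _ _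
    (lppMW_pmul_le o2 o1 hpot p u) ?_
  cases hW : lppMW o2 u with
  | bot => exact wbleM_bot o2 _
  | coe T =>
    rw [WithBot.map_coe]
    refine le_lppMW o2 (mem_msupport_iff_mcoeff.mpr ?_)
    rw [mcoeff_pmul_lpp o2 o1 hpot hW hp]
    have hT : T ∈ msupport u := @Finset.mem_of_max _ o2.ord _ _ hW
    exact mul_ne_zero (lc_ne_zero o1 hp) (mem_msupport_iff_mcoeff.mp hT)
/-! ### composition lemmas -/

lemma mtmul_mtmul (δ γ : PP n) (T : MTerm n m) : mtmul δ (mtmul γ T) = mtmul (δ + γ) T := by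
  simp [mtmul, add_assoc]

lemma map_mtmul_map (δ γ : PP n) (a : WithBot (MTerm n m)) :
    WithBot.map (mtmul δ) (WithBot.map (mtmul γ) a) = WithBot.map (mtmul (δ + γ)) a := by
  cases a with
  | bot => rfl
  | coe T => simp [WithBot.map_coe, mtmul_mtmul]

lemma lppMW_smulPP_lpp (hpot : IsPOT o1 o2) {p : MvPolynomial (Fin n) K} (u : ModElem K n m)
    (hp : p ≠ 0) : lppMW o2 (smulPP (lpp o1 p) u) = lppMW o2 (pmul p u) := by
  rw [lppMW_smulPP, lppMW_pmul o2 o1 hpot u hp]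

/-! ### the sup `D` of a representation -/

def SS1 : SemilatticeSup (WithBot (PP n)) :=
  (@LinearOrder.toLattice _ (@WithBot.linearOrder _ o1.ord)).toSemilatticeSup

def OB1 : @OrderBot (WithBot (PP n))
    (@Preorder.toLE _ (@PartialOrder.toPreorder _ (@SemilatticeSup.toPartialOrder _ (SS1 o1)))) :=
  @WithBot.instOrderBot _ o1.ord.toLE

def supD {ι : Type*} (s : Finset ι) (v : ι → WithBot (PP n)) : WithBot (PP n) :=
  @Finset.sup _ _ (SS1 o1) (OB1 o1) s v

lemma le_supD {ι : Type*} {s : Finset ι} {v : ι → WithBot (PP n)} {q : ι} (hq : q ∈ s) :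
    wbleP o1 (v q) (supD o1 s v) := @Finset.le_sup _ _ (SS1 o1) (OB1 o1) _ _ _ hq

lemma supD_le {ι : Type*} {s : Finset ι} {v : ι → WithBot (PP n)} {c : WithBot (PP n)}
    (h : ∀ q ∈ s, wbleP o1 (v q) c) : wbleP o1 (supD o1 s v) c :=
  @Finset.sup_le _ _ (SS1 o1) (OB1 o1) _ _ _ h

lemma exists_eq_supD {ι : Type*} {s : Finset ι} {v : ι → WithBot (PP n)}
    (hne : supD o1 s v ≠ ⊥) : ∃ q ∈ s, v q = supD o1 s v := by
  have hsne : s.Nonempty := by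
    rcases s.eq_empty_or_nonempty with rfl | h
    · exact absurd (@Finset.sup_empty _ _ (SS1 o1) (OB1 o1) v) hne
    · exact h
  rcases @Finset.exists_mem_eq_sup _ _ (@WithBot.linearOrder _ o1.ord) (OB1 o1) s hsne v with
    ⟨q, hq, hval⟩
  exact ⟨q, hq, hval.symm⟩
/-! ### representations -/

open scoped Classical

section Main

variable {G : Set (MvPolynomial (Fin n) K × ModElem K n m)}

def RepOK (o2 : ModOrd n m) (hfin : G.Finite) (f : MvPolynomial (Fin n) K) (u : ModElem K n m)
    (P : (MvPolynomial (Fin n) K × ModElem K n m) → MvPolynomial (Fin n) K) : Prop :=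
  f = ∑ q ∈ hfin.toFinset, P q * q.1 ∧
  ∀ q ∈ hfin.toFinset, wbleM o2 (lppMW o2 (pmul (P q) q.2)) (lppMW o2 u)

def Dof (o1 : MonOrd n) (hfin : G.Finite)
    (P : (MvPolynomial (Fin n) K × ModElem K n m) → MvPolynomial (Fin n) K) : WithBot (PP n) :=
  supD o1 hfin.toFinset (fun q => lppW o1 (P q * q.1))

def Cnt (o1 : MonOrd n) (hfin : G.Finite)
    (P : (MvPolynomial (Fin n) K × ModElem K n m) → MvPolynomial (Fin n) K) : ℕ :=
  (hfin.toFinset.filter (fun q => lppW o1 (P q * q.1) = Dof o1 hfin P)).card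

variable {o2 : ModOrd n m} {F : Fin m → MvPolynomial (Fin n) K} {hfin : G.Finite}
  {f : MvPolynomial (Fin n) K} {u : ModElem K n m}

lemma pmul_eVec_msupport (p : MvPolynomial (Fin n) K) (j : Fin m) :
    msupport (pmul p (eVec j) : ModElem K n m) ⊆ msupport (fun k => if k = j then p else 0) := by
  intro t ht
  rw [mem_msupport] at ht ⊢
  have : pmul p (eVec j) t.2 = if t.2 = j then p else 0 := by
    rw [pmul, eVec]; split <;> simp
  rwa [this] at ht

lemma rep_exists (hFmem : ∀ i : Fin m, (F i, eVec i) ∈ G) (hu : f = dotF u F) :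
    RepOK o2 hfin f u
      (fun q => ∑ j ∈ Finset.univ.filter (fun j => (F j, eVec j) = q), u j) := by
  constructor
  · have hmaps : ∀ j ∈ (Finset.univ : Finset (Fin m)), (F j, eVec j) ∈ hfin.toFinset :=
      fun j _ => hfin.mem_toFinset.mpr (hFmem j)
    calc f = ∑ j : Fin m, u j * F j := hu
    _ = ∑ q ∈ hfin.toFinset, ∑ j ∈ Finset.univ.filter (fun j => (F j, eVec j) = q),
          u j * q.1 := by
        rw [← Finset.sum_fiberwise_of_maps_to hmaps (fun j => u j * F j)]
        refine Finset.sum_congr rfl fun q _ => Finset.sum_congr rfl fun j hj => ?_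
        rw [← (Finset.mem_filter.mp hj).2]
    _ = ∑ q ∈ hfin.toFinset,
          (∑ j ∈ Finset.univ.filter (fun j => (F j, eVec j) = q), u j) * q.1 := by
        refine Finset.sum_congr rfl fun q _ => ?_
        rw [Finset.sum_mul]
  · intro q hq
    have hpm : pmul (∑ j ∈ Finset.univ.filter (fun j => (F j, eVec j) = q), u j) q.2 =
        ∑ j ∈ Finset.univ.filter (fun j => (F j, eVec j) = q), pmul (u j) q.2 := by
      funext k
      simp [pmul, Finset.sum_mul, Finset.sum_apply]
    rw [hpm]
    refine lppMW_sum_le o2 fun j hj => ?_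
    have hqj : (F j, eVec j) = q := (Finset.mem_filter.mp hj).2
    have hq2 : q.2 = eVec j := by rw [← hqj]
    rw [hq2]
    refine wbleM_trans o2 (lppMW_le_of_subset o2 (pmul_eVec_msupport (u j) j)) ?_
    refine lppMW_le_of_subset o2 fun t ht => ?_
    rw [mem_msupport] at ht ⊢
    by_cases h : t.2 = j
    · subst h; simpa using ht
    · simp [h] at ht

lemma lppW_f_le_Dof {o1 : MonOrd n} {P} (hP : RepOK o2 hfin f u P) :
    wbleP o1 (lppW o1 f) (Dof o1 hfin P) := by
  rw [hP.1]
  exact lppW_sum_le o1 fun q hq => le_supD o1 (v := fun q => lppW o1 (P q * q.1)) hq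

end Main
/-! ### strict add bound and S-polynomial degree drop -/

section Surgery

variable {o1 : MonOrd n} {o2 : ModOrd n m}

lemma lppW_add_lt {f g : MvPolynomial (Fin n) K} {d : PP n}
    (hf : wbltP o1 (lppW o1 f) ↑d) (hg : wbltP o1 (lppW o1 g) ↑d) :
    wbltP o1 (lppW o1 (f + g)) ↑d := by
  refine (lppW_lt_coe_iff o1).mpr fun β hβ => ?_
  rcases Finset.mem_union.mp (MvPolynomial.support_add hβ) with h | h
  · exact (lppW_lt_coe_iff o1).mp hf β h
  · exact (lppW_lt_coe_iff o1).mp hg β h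

lemma lppW_sub_lt {f g : MvPolynomial (Fin n) K} {d : PP n}
    (hf : wbltP o1 (lppW o1 f) ↑d) (hg : wbltP o1 (lppW o1 g) ↑d) :
    wbltP o1 (lppW o1 (f - g)) ↑d := by
  rw [sub_eq_add_neg]
  exact lppW_add_lt hf (by rwa [lppW_neg])

lemma spolyF_deg_lt {k l : MvPolynomial (Fin n) K × ModElem K n m}
    (hk1 : k.1 ≠ 0) (hl1 : l.1 ≠ 0) :
    wbltP o1 (lppW o1 (sPolyF o1 k l)) ↑(lpp o1 k.1 ⊔ lpp o1 l.1) := by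
  set t : PP n := lpp o1 k.1 ⊔ lpp o1 l.1 with ht
  have hkt : lpp o1 k.1 ≤ t := le_sup_left
  have hlt : lpp o1 l.1 ≤ t := le_sup_right
  have htk : tf o1 k.1 l.1 + lpp o1 k.1 = t := pp_sub_add hkt
  have htl : tf o1 l.1 k.1 + lpp o1 l.1 = t := by
    rw [tf, sup_comm]; exact pp_sub_add hlt
  set A : MvPolynomial (Fin n) K := monomial (tf o1 k.1 l.1) (1 : K) * k.1 with hA
  set B : MvPolynomial (Fin n) K :=
    monomial (tf o1 l.1 k.1) (lc o1 k.1 / lc o1 l.1) * l.1 with hB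
  have hAle : wbleP o1 (lppW o1 A) ↑t := by
    have := lppW_monomial_mul_le o1 (γ := tf o1 k.1 l.1) (c := (1:K))
      (h := k.1) (β := lpp o1 k.1) (by rw [lppW_coe o1 hk1]; exact wbleP_refl o1 _)
    rwa [htk] at this
  have hBle : wbleP o1 (lppW o1 B) ↑t := by
    have := lppW_monomial_mul_le o1 (γ := tf o1 l.1 k.1) (c := lc o1 k.1 / lc o1 l.1)
      (h := l.1) (β := lpp o1 l.1) (by rw [lppW_coe o1 hl1]; exact wbleP_refl o1 _)
    rwa [htl] at this
  have hcoefft : (sPolyF o1 k l).coeff t = 0 := by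
    have hca : A.coeff t = lc o1 k.1 := by
      rw [← htk, hA, MvPolynomial.coeff_monomial_mul, one_mul]; rfl
    have hcb : B.coeff t = lc o1 k.1 := by
      rw [← htl, hB, MvPolynomial.coeff_monomial_mul]
      show lc o1 k.1 / lc o1 l.1 * lc o1 l.1 = lc o1 k.1
      exact div_mul_cancel₀ _ (lc_ne_zero o1 hl1)
    rw [sPolyF, ← hA, ← hB, MvPolynomial.coeff_sub, hca, hcb, sub_self]
  refine (lppW_lt_coe_iff o1).mpr fun β hβ => ?_
  have hβne : β ≠ t := by
    intro h; subst h
    exact MvPolynomial.mem_support_iff.mp hβ hcoefft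
  have hβmem : β ∈ A.support ∪ B.support := by
    have : sPolyF o1 k l = A - B := by rw [sPolyF, ← hA, ← hB]
    rw [this, sub_eq_add_neg] at hβ
    rcases Finset.mem_union.mp (MvPolynomial.support_add hβ) with h | h
    · exact Finset.mem_union_left _ h
    · rw [MvPolynomial.support_neg] at h
      exact Finset.mem_union_right _ h
  have hβle : o1.ord.le β t := by
    rcases Finset.mem_union.mp hβmem with h | h
    · exact (wbleP_coe_coe o1).mp (wbleP_trans o1 (le_lppW o1 h) hAle)
    · exact (wbleP_coe_coe o1).mp (wbleP_trans o1 (le_lppW o1 h) hBle)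
  exact @lt_of_le_of_ne _ o1.ord.toPartialOrder _ _ hβle hβne

end Surgery
section SurgeryMain

variable {o1 : MonOrd n} {o2 : ModOrd n m}
  {G : Set (MvPolynomial (Fin n) K × ModElem K n m)}

lemma lppMW_zero : lppMW o2 (0 : ModElem K n m) = ⊥ := by
  rw [lppMW_eq_bot_iff]
  ext t
  simp [msupport]

lemma surgery (hpot : IsPOT o1 o2) (hfin : G.Finite)
    {f : MvPolynomial (Fin n) K} {u : ModElem K n m}
    {P : (MvPolynomial (Fin n) K × ModElem K n m) → MvPolynomial (Fin n) K} {d : PP n}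
    {k l : MvPolynomial (Fin n) K × ModElem K n m}
    (hP : RepOK o2 hfin f u P) (hD : Dof o1 hfin P = ↑d)
    (hk : k ∈ hfin.toFinset) (hl : l ∈ hfin.toFinset) (hkl : k ≠ l)
    (hkd : lppW o1 (P k * k.1) = ↑d) (hld : lppW o1 (P l * l.1) = ↑d)
    (hstd : HasStdRep o1 o2 G (sPolyF o1 k l) (sPolyU o1 k l)) :
    ∃ P', RepOK o2 hfin f u P' ∧
      (∀ q ∈ hfin.toFinset, wbleP o1 (lppW o1 (P' q * q.1)) ↑d) ∧
      wbltP o1 (lppW o1 (P' k * k.1)) ↑d ∧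
      (∀ q ∈ hfin.toFinset, q ≠ k → lppW o1 (P' q * q.1) = (↑d : WithBot (PP n)) →
        lppW o1 (P q * q.1) = (↑d : WithBot (PP n))) := by
  classical
  -- nonvanishing
  have hPk1 : P k * k.1 ≠ 0 := by
    intro h0; rw [h0, (lppW_eq_bot_iff o1 (0:MvPolynomial (Fin n) K)).mpr rfl] at hkd
    exact WithBot.bot_ne_coe hkd
  have hPl1 : P l * l.1 ≠ 0 := by
    intro h0; rw [h0, (lppW_eq_bot_iff o1 (0:MvPolynomial (Fin n) K)).mpr rfl] at hld
    exact WithBot.bot_ne_coe hld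
  have hk1 : k.1 ≠ 0 := fun h => hPk1 (by rw [h, mul_zero])
  have hl1 : l.1 ≠ 0 := fun h => hPl1 (by rw [h, mul_zero])
  have hPk : P k ≠ 0 := fun h => hPk1 (by rw [h, zero_mul])
  have hPl : P l ≠ 0 := fun h => hPl1 (by rw [h, zero_mul])
  have d_eq_k : d = lpp o1 (P k) + lpp o1 k.1 :=
    WithBot.coe_injective (hkd.symm.trans (lppW_mul o1 hPk hk1))
  have d_eq_l : d = lpp o1 (P l) + lpp o1 l.1 :=
    WithBot.coe_injective (hld.symm.trans (lppW_mul o1 hPl hl1))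
  set t : PP n := lpp o1 k.1 ⊔ lpp o1 l.1 with ht
  set tk : PP n := tf o1 k.1 l.1 with htk
  set tl : PP n := tf o1 l.1 k.1 with htl
  set δ : PP n := d - t with hδ
  set c : K := lc o1 (P k) with hc
  set cc : K := lc o1 k.1 / lc o1 l.1 with hcc
  have hkt : lpp o1 k.1 ≤ t := le_sup_left
  have hlt2 : lpp o1 l.1 ≤ t := le_sup_right
  have htk' : tk = t - lpp o1 k.1 := rfl
  have htl' : tl = t - lpp o1 l.1 := by rw [htl, tf, sup_comm]
  have hkdle : lpp o1 k.1 ≤ d := by rw [d_eq_k]; exact le_add_self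
  have hldle : lpp o1 l.1 ≤ d := by rw [d_eq_l]; exact le_add_self
  have htd : t ≤ d := sup_le hkdle hldle
  have hδtk : δ + tk = lpp o1 (P k) := by
    rw [hδ, htk', pp_sub_add_sub htd hkt, d_eq_k, pp_add_sub]
  have hδtl : δ + tl = lpp o1 (P l) := by
    rw [hδ, htl', pp_sub_add_sub htd hlt2, d_eq_l, pp_add_sub]
  have hδt : δ + t = d := pp_sub_add htd
  obtain ⟨s', p', q', hq'mem, hsum', hdeg', hsig'⟩ := hstd
  set SP : (MvPolynomial (Fin n) K × ModElem K n m) → MvPolynomial (Fin n) K :=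
    fun q => ∑ i ∈ Finset.univ.filter (fun i => q' i = q), p' i with hSP
  set P' : (MvPolynomial (Fin n) K × ModElem K n m) → MvPolynomial (Fin n) K :=
    fun q => P q + (if q = k then -(monomial (lpp o1 (P k)) c) else 0) +
      (if q = l then monomial (lpp o1 (P l)) (c * cc) else 0) +
      monomial δ c * SP q with hP'
  -- inner sum identities
  have hSPmul : ∀ q, SP q * q.1 = ∑ i ∈ Finset.univ.filter (fun i => q' i = q),
      p' i * (q' i).1 := by
    intro q
    rw [hSP, Finset.sum_mul]
    refine Finset.sum_congr rfl fun i hi => ?_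
    rw [(Finset.mem_filter.mp hi).2]
  have hSPsum : ∑ q ∈ hfin.toFinset, SP q * q.1 = sPolyF o1 k l := by
    rw [hsum']
    calc ∑ q ∈ hfin.toFinset, SP q * q.1
        = ∑ q ∈ hfin.toFinset, ∑ i ∈ Finset.univ.filter (fun i => q' i = q),
            p' i * (q' i).1 := Finset.sum_congr rfl fun q _ => hSPmul q
      _ = ∑ i, p' i * (q' i).1 :=
          Finset.sum_fiberwise_of_maps_to (fun i _ => hfin.mem_toFinset.mpr (hq'mem i)) _
  have hcancel : monomial δ c * sPolyF o1 k l =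
      monomial (lpp o1 (P k)) c * k.1 - monomial (lpp o1 (P l)) (c * cc) * l.1 := by
    rw [sPolyF, mul_sub, ← mul_assoc, ← mul_assoc, MvPolynomial.monomial_mul,
      MvPolynomial.monomial_mul, ← htk, ← htl, ← hcc, hδtk, hδtl]
    try rw [mul_one]
  -- the strict degree bound for the S-polynomial pieces
  have hsp_lt : ∀ q, wbltP o1 (lppW o1 ((monomial δ c * SP q) * q.1)) ↑d := by
    intro q
    rw [mul_assoc]
    have h1 : wbleP o1 (lppW o1 (SP q * q.1)) (lppW o1 (sPolyF o1 k l)) := by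
      rw [hSPmul q]
      exact lppW_sum_le o1 fun i _ => hdeg' i
    have h2 : wbltP o1 (lppW o1 (SP q * q.1)) ↑t :=
      wbltP_of_le_of_lt o1 h1 (spolyF_deg_lt hk1 hl1)
    have h3 := lppW_monomial_mul_lt o1 (γ := δ) (c := c) h2
    rwa [hδt] at h3
  -- signature bounds for the two monomial correction pieces
  have hkey_k : ∀ c' : K,
      wbleM o2 (lppMW o2 (pmul (monomial (lpp o1 (P k)) c') k.2)) (lppMW o2 u) := by
    intro c'
    refine wbleM_trans o2 (lppMW_pmul_monomial_le o2 _ _ _) ?_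
    rw [← lppMW_smulPP, lppMW_smulPP_lpp o2 o1 hpot _ hPk]
    exact hP.2 k hk
  have hkey_l : ∀ c' : K,
      wbleM o2 (lppMW o2 (pmul (monomial (lpp o1 (P l)) c') l.2)) (lppMW o2 u) := by
    intro c'
    refine wbleM_trans o2 (lppMW_pmul_monomial_le o2 _ _ _) ?_
    rw [← lppMW_smulPP, lppMW_smulPP_lpp o2 o1 hpot _ hPl]
    exact hP.2 l hl
  refine ⟨P', ⟨?_, ?_⟩, ?_, ?_, ?_⟩
  · -- sum identity
    have hsplit : ∑ q ∈ hfin.toFinset, P' q * q.1 =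
        (∑ q ∈ hfin.toFinset, P q * q.1) + (-(monomial (lpp o1 (P k)) c) * k.1) +
        (monomial (lpp o1 (P l)) (c * cc) * l.1) +
        monomial δ c * sPolyF o1 k l := by
      rw [← hSPsum, Finset.mul_sum]
      have : ∀ q ∈ hfin.toFinset, P' q * q.1 = P q * q.1 +
          (if q = k then -(monomial (lpp o1 (P k)) c) * q.1 else 0) +
          (if q = l then monomial (lpp o1 (P l)) (c * cc) * q.1 else 0) +
          monomial δ c * (SP q * q.1) := by
        intro q _
        rw [hP']
        simp only [add_mul, ite_mul, zero_mul, mul_assoc]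
      rw [Finset.sum_congr rfl this]
      rw [Finset.sum_add_distrib, Finset.sum_add_distrib, Finset.sum_add_distrib]
      rw [Finset.sum_ite_eq' hfin.toFinset k (fun q => -(monomial (lpp o1 (P k)) c) * q.1),
        Finset.sum_ite_eq' hfin.toFinset l (fun q => monomial (lpp o1 (P l)) (c * cc) * q.1),
        if_pos hk, if_pos hl]
    rw [hsplit, ← hP.1, hcancel]
    ring
  · -- signature bounds
    intro q hq
    have hsplit : pmul (P' q) q.2 =
        pmul (P q) q.2 + pmul (if q = k then -(monomial (lpp o1 (P k)) c) else 0) q.2 +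
        pmul (if q = l then monomial (lpp o1 (P l)) (c * cc) else 0) q.2 +
        pmul (monomial δ c) (pmul (SP q) q.2) := by
      funext j
      rw [hP']
      simp only [pmul, Pi.add_apply, add_mul, mul_assoc]
      try rfl
    rw [hsplit]
    refine lppMW_add_le o2 (lppMW_add_le o2 (lppMW_add_le o2 (hP.2 q hq) ?_) ?_) ?_
    · by_cases hqk : q = k
      · subst hqk
        rw [if_pos rfl]
        have hneg : pmul (-(monomial (lpp o1 (P q)) c)) q.2 =
            fun j => -((pmul (monomial (lpp o1 (P q)) c) q.2) j) := by
          funext j; simp [pmul]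
        rw [hneg, lppMW_neg]
        exact hkey_k c
      · rw [if_neg hqk]
        have : pmul (0 : MvPolynomial (Fin n) K) q.2 = 0 := funext fun j => zero_mul _
        rw [this, lppMW_zero]
        exact wbleM_bot o2 _
    · by_cases hql : q = l
      · subst hql
        rw [if_pos rfl]
        exact hkey_l (c * cc)
      · rw [if_neg hql]
        have : pmul (0 : MvPolynomial (Fin n) K) q.2 = 0 := funext fun j => zero_mul _
        rw [this, lppMW_zero]
        exact wbleM_bot o2 _
    · refine wbleM_trans o2 (lppMW_pmul_monomial_le o2 δ c _) ?_
      have hSPq : lppMW o2 (pmul (SP q) q.2) ≠ ⊥ ∨ True := Or.inr trivial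
      have hbound : wbleM o2 (lppMW o2 (pmul (SP q) q.2)) (lppMW o2 (sPolyU o1 k l)) := by
        have hexp : pmul (SP q) q.2 =
            ∑ i ∈ Finset.univ.filter (fun i => q' i = q), pmul (p' i) q.2 := by
          funext j
          rw [hSP]
          simp [pmul, Finset.sum_mul, Finset.sum_apply]
        rw [hexp]
        refine lppMW_sum_le o2 fun i hi => ?_
        have hqi : q' i = q := (Finset.mem_filter.mp hi).2
        rw [← hqi]
        exact hsig' i
      refine wbleM_trans o2 (wbleM_map_mtmul o2 (γ := δ) hbound) ?_
      rw [← lppMW_smulPP]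
      have hsm : smulPP δ (sPolyU o1 k l) = fun j =>
          (pmul (monomial (lpp o1 (P k)) (1:K)) k.2) j -
          (pmul (monomial (lpp o1 (P l)) cc) l.2) j := by
        funext j
        simp only [smulPP, sPolyU, pmul]
        rw [mul_sub, ← mul_assoc, ← mul_assoc, MvPolynomial.monomial_mul,
          MvPolynomial.monomial_mul, ← htk, ← htl, hδtk, hδtl]
        try rw [mul_one]
        try rw [one_mul]
        try rw [one_mul]
      rw [hsm]
      exact lppMW_fun_sub_le o2 (hkey_k 1) (hkey_l cc)
  · -- degree bounds
    intro q hq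
    have hqd : wbleP o1 (lppW o1 (P q * q.1)) ↑d := by
      rw [← hD]
      exact le_supD o1 (v := fun q => lppW o1 (P q * q.1)) hq
    have hsplit : P' q * q.1 = P q * q.1 +
        (if q = k then -(monomial (lpp o1 (P k)) c) * q.1 else 0) +
        (if q = l then monomial (lpp o1 (P l)) (c * cc) * q.1 else 0) +
        (monomial δ c * SP q) * q.1 := by
      rw [hP']
      simp only [add_mul, ite_mul, zero_mul]
    rw [hsplit]
    refine lppW_add_le o1 (lppW_add_le o1 (lppW_add_le o1 hqd ?_) ?_) (wbleP_of_lt o1 (hsp_lt q))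
    · by_cases hqk : q = k
      · rw [if_pos hqk, hqk, neg_mul, lppW_neg]
        have := lppW_monomial_mul_le o1 (γ := lpp o1 (P k)) (c := c) (h := k.1)
          (β := lpp o1 k.1) (by rw [lppW_coe o1 hk1]; exact wbleP_refl o1 _)
        rwa [← d_eq_k] at this
      · rw [if_neg hqk, (lppW_eq_bot_iff o1 (0:MvPolynomial (Fin n) K)).mpr rfl]
        exact wbleP_bot o1 _
    · by_cases hql : q = l
      · rw [if_pos hql, hql]
        have := lppW_monomial_mul_le o1 (γ := lpp o1 (P l)) (c := c * cc) (h := l.1)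
          (β := lpp o1 l.1) (by rw [lppW_coe o1 hl1]; exact wbleP_refl o1 _)
        rwa [← d_eq_l] at this
      · rw [if_neg hql, (lppW_eq_bot_iff o1 (0:MvPolynomial (Fin n) K)).mpr rfl]
        exact wbleP_bot o1 _
  · -- strict drop at k
    have hPk' : P' k = (P k - monomial (lpp o1 (P k)) c) + monomial δ c * SP k := by
      simp only [hP', eq_self_iff_true, if_true, if_neg hkl]
      ring
    rw [hPk', add_mul]
    refine lppW_add_lt ?_ (hsp_lt k)
    have h1 : wbltP o1 (lppW o1 (P k - monomial (lpp o1 (P k)) c)) ↑(lpp o1 (P k)) :=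
      lppW_sub_lead o1 hPk
    have h2 : wbleP o1 (lppW o1 k.1) ↑(lpp o1 k.1) := by
      rw [lppW_coe o1 hk1]; exact wbleP_refl o1 _
    have := lppW_mul_lt o1 h1 h2
    rwa [← d_eq_k] at this
  · -- the only index whose top can drop is k
    intro q hq hqk hq'd
    by_cases hql : q = l
    · subst hql; exact hld
    have hqd : wbleP o1 (lppW o1 (P q * q.1)) ↑d := by
      rw [← hD]
      exact le_supD o1 (v := fun q => lppW o1 (P q * q.1)) hq
    have hsplit : P' q * q.1 = P q * q.1 + (monomial δ c * SP q) * q.1 := by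
      simp only [hP', if_neg hqk, if_neg hql]
      ring
    have hz : (P' q * q.1) ≠ 0 := by
      intro h0; rw [h0, (lppW_eq_bot_iff o1 (0:MvPolynomial (Fin n) K)).mpr rfl] at hq'd
      exact WithBot.bot_ne_coe hq'd
    have hlppq : lpp o1 (P' q * q.1) = d := by
      have := lppW_coe o1 hz
      rw [hq'd] at this
      exact (WithBot.coe_injective this).symm
    have hcne : (P' q * q.1).coeff d ≠ 0 := by
      rw [← hlppq]
      exact lc_ne_zero o1 hz
    have hczero : ((monomial δ c * SP q) * q.1).coeff d = 0 :=
      coeff_eq_zero_of_lppW_lt o1 (hsp_lt q)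
    have hcPq : (P q * q.1).coeff d ≠ 0 := by
      intro h0
      apply hcne
      rw [hsplit, MvPolynomial.coeff_add, h0, hczero, add_zero]
    have hmem : d ∈ (P q * q.1).support := MvPolynomial.mem_support_iff.mpr hcPq
    exact @le_antisymm _ (@WithBot.instPartialOrder _ o1.ord.toPartialOrder) _ _
      hqd (le_lppW o1 hmem)

end SurgeryMain
section MainInduction

variable {o1 : MonOrd n} {o2 : ModOrd n m}
  {G : Set (MvPolynomial (Fin n) K × ModElem K n m)}

def GoalStmt (o1 : MonOrd n) (o2 : ModOrd n m)
    (G : Set (MvPolynomial (Fin n) K × ModElem K n m))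
    (f : MvPolynomial (Fin n) K) (u : ModElem K n m) : Prop :=
  ∃ p ∈ G, p.1 ≠ 0 ∧ lpp o1 p.1 ≤ lpp o1 f ∧
    wbleM o2 (lppMW o2 (smulPP (lpp o1 f - lpp o1 p.1) p.2)) (lppMW o2 u)

lemma main_induction (hpot : IsPOT o1 o2) (hfin : G.Finite)
    (later : (MvPolynomial (Fin n) K × ModElem K n m) →
      (MvPolynomial (Fin n) K × ModElem K n m) → Prop)
    (hsto : StrictTotalOn G later)
    (hyp : ∀ p ∈ G, ∀ q ∈ G, IsCritPairL o1 o2 later p q →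
      HasStdRep o1 o2 G (sPolyF o1 p q) (sPolyU o1 p q))
    {f : MvPolynomial (Fin n) K} {u : ModElem K n m} (hf0 : f ≠ 0)
    {P : (MvPolynomial (Fin n) K × ModElem K n m) → MvPolynomial (Fin n) K}
    (hPrep : RepOK o2 hfin f u P) : GoalStmt o1 o2 G f u := by
  classical
  have hwfP : WellFounded (wbltP o1) :=
    (@WithBot.instWellFoundedLT (PP n) o1.ord.toLT ⟨o1.wf⟩).wf
  have hwf : WellFounded (Prod.Lex (wbltP o1) (fun a b : ℕ => a < b)) :=
    WellFounded.prod_lex hwfP (Nat.lt_wfRel.wf)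
  have main : ∀ μ : WithBot (PP n) × ℕ,
      ∀ P, RepOK o2 hfin f u P → (Dof o1 hfin P, Cnt o1 hfin P) = μ →
      GoalStmt o1 o2 G f u := by
    intro μ0
    induction μ0 using WellFounded.induction hwf with
    | _ μ IH =>
    intro P hP hμ
    subst hμ
    have hDge : wbleP o1 (lppW o1 f) (Dof o1 hfin P) := lppW_f_le_Dof hP
    have hlppWf : lppW o1 f = ↑(lpp o1 f) := lppW_coe o1 hf0
    cases hD : Dof o1 hfin P with
    | bot =>
      rw [hD, hlppWf] at hDge
      exact absurd hDge (@WithBot.not_coe_le_bot _ o1.ord.toLE _)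
    | coe d =>
    obtain ⟨q0, hq0mem, hq0⟩ := exists_eq_supD o1
      (v := fun q => lppW o1 (P q * q.1)) (s := hfin.toFinset)
      (by rw [show supD o1 hfin.toFinset (fun q => lppW o1 (P q * q.1)) =
            Dof o1 hfin P from rfl, hD]; exact WithBot.coe_ne_bot)
    have hq0d : lppW o1 (P q0 * q0.1) = ↑d := by
      rw [hq0, show supD o1 hfin.toFinset (fun q => lppW o1 (P q * q.1)) =
        Dof o1 hfin P from rfl, hD]
    by_cases hcase : lpp o1 f = d
    · -- case A : the top of the representation is lpp f
      subst hcase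
      have hq0ne : P q0 * q0.1 ≠ 0 := by
        intro h0
        rw [h0, (lppW_eq_bot_iff o1 (0 : MvPolynomial (Fin n) K)).mpr rfl] at hq0d
        exact WithBot.bot_ne_coe hq0d
      have hq01 : q0.1 ≠ 0 := fun h => hq0ne (by rw [h, mul_zero])
      have hPq0 : P q0 ≠ 0 := fun h => hq0ne (by rw [h, zero_mul])
      have heq2 : lpp o1 f = lpp o1 (P q0) + lpp o1 q0.1 :=
        WithBot.coe_injective (hq0d.symm.trans (lppW_mul o1 hPq0 hq01))
      refine ⟨q0, hfin.mem_toFinset.mp hq0mem, hq01, ?_, ?_⟩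
      · rw [heq2]; exact le_add_self
      · have hsub : lpp o1 f - lpp o1 q0.1 = lpp o1 (P q0) := by
          rw [heq2, pp_add_sub]
        rw [hsub, lppMW_smulPP_lpp o2 o1 hpot _ hPq0]
        exact hP.2 q0 hq0mem
    · -- case B : strict inequality, find two top indices and rewrite
      have hne : lppW o1 f ≠ ↑d := by
        rw [hlppWf]; exact fun h => hcase (WithBot.coe_injective h)
      have hlt : wbltP o1 (lppW o1 f) ↑d := by
        rw [hD] at hDge
        exact @lt_of_le_of_ne _ (@WithBot.instPartialOrder _ o1.ord.toPartialOrder) _ _ hDge hne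
      set S : Finset (MvPolynomial (Fin n) K × ModElem K n m) :=
        hfin.toFinset.filter (fun q => lppW o1 (P q * q.1) = (↑d : WithBot (PP n))) with hS
      have hq0S : q0 ∈ S := Finset.mem_filter.mpr ⟨hq0mem, hq0d⟩
      have hfd0 : f.coeff d = 0 := coeff_eq_zero_of_lppW_lt o1 hlt
      have hcoeff_sum : f.coeff d = ∑ q ∈ S, (P q * q.1).coeff d := by
        conv_lhs => rw [hP.1]
        rw [MvPolynomial.coeff_sum]
        refine (Finset.sum_subset (Finset.filter_subset _ _) fun q hq hq' => ?_).symm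
        have hqle : wbleP o1 (lppW o1 (P q * q.1)) ↑d := by
          rw [← hD]
          exact le_supD o1 (v := fun q => lppW o1 (P q * q.1)) hq
        have hqne : lppW o1 (P q * q.1) ≠ ↑d := fun h =>
          hq' (Finset.mem_filter.mpr ⟨hq, h⟩)
        exact coeff_eq_zero_of_lppW_lt o1
          (@lt_of_le_of_ne _ (@WithBot.instPartialOrder _ o1.ord.toPartialOrder) _ _ hqle hqne)
      have hcS : ∀ q ∈ S, (P q * q.1).coeff d ≠ 0 := by
        intro q hq
        have hqd : lppW o1 (P q * q.1) = ↑d := (Finset.mem_filter.mp hq).2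
        have hqne : P q * q.1 ≠ 0 := by
          intro h0
          rw [h0, (lppW_eq_bot_iff o1 (0 : MvPolynomial (Fin n) K)).mpr rfl] at hqd
          exact WithBot.bot_ne_coe hqd
        have : lpp o1 (P q * q.1) = d :=
          WithBot.coe_injective ((lppW_coe o1 hqne).symm.trans hqd)
        rw [← this]
        exact lc_ne_zero o1 hqne
      have h2 : 1 < S.card := by
        by_contra hcon
        push_neg at hcon
        interval_cases h : S.card
        · exact absurd (Finset.card_eq_zero.mp h ▸ hq0S) (Finset.notMem_empty q0)
        · obtain ⟨a, ha⟩ := Finset.card_eq_one.mp h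
          rw [ha, Finset.sum_singleton] at hcoeff_sum
          exact hcS a (ha ▸ Finset.mem_singleton_self a) (hcoeff_sum ▸ hfd0)
      obtain ⟨k, hkS, l, hlS, hkl⟩ := Finset.one_lt_card.mp h2
      have hkGf : k ∈ hfin.toFinset := (Finset.mem_filter.mp hkS).1
      have hlGf : l ∈ hfin.toFinset := (Finset.mem_filter.mp hlS).1
      have hkd : lppW o1 (P k * k.1) = ↑d := (Finset.mem_filter.mp hkS).2
      have hld : lppW o1 (P l * l.1) = ↑d := (Finset.mem_filter.mp hlS).2
      have hkG : k ∈ G := hfin.mem_toFinset.mp hkGf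
      have hlG : l ∈ G := hfin.mem_toFinset.mp hlGf
      have hk1 : k.1 ≠ 0 := by
        intro h
        have : P k * k.1 = 0 := by rw [h, mul_zero]
        rw [this, (lppW_eq_bot_iff o1 (0 : MvPolynomial (Fin n) K)).mpr rfl] at hkd
        exact WithBot.bot_ne_coe hkd
      have hl1 : l.1 ≠ 0 := by
        intro h
        have : P l * l.1 = 0 := by rw [h, mul_zero]
        rw [this, (lppW_eq_bot_iff o1 (0 : MvPolynomial (Fin n) K)).mpr rfl] at hld
        exact WithBot.bot_ne_coe hld
      -- once we have a strictly better representation we can conclude by IH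
      have finish : ∀ w ∈ S, ∀ P', RepOK o2 hfin f u P' →
          (∀ q ∈ hfin.toFinset, wbleP o1 (lppW o1 (P' q * q.1)) ↑d) →
          wbltP o1 (lppW o1 (P' w * w.1)) ↑d →
          (∀ q ∈ hfin.toFinset, q ≠ w → lppW o1 (P' q * q.1) = (↑d : WithBot (PP n)) →
            lppW o1 (P q * q.1) = (↑d : WithBot (PP n))) →
          GoalStmt o1 o2 G f u := by
        intro w hwS P' hP' hble hwlt hdrop
        have hD'le : wbleP o1 (Dof o1 hfin P') ↑d := supD_le o1 hble
        by_cases hDeq : Dof o1 hfin P' = (↑d : WithBot (PP n))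
        · -- same top: the number of top indices went down
          have hcnt : Cnt o1 hfin P' < Cnt o1 hfin P := by
            have hCP : Cnt o1 hfin P = S.card := by
              rw [Cnt, hD, hS]
            have hCP' : Cnt o1 hfin P' =
                (hfin.toFinset.filter
                  (fun q => lppW o1 (P' q * q.1) = (↑d : WithBot (PP n)))).card := by
              rw [Cnt, hDeq]
            have hsub : hfin.toFinset.filter
                (fun q => lppW o1 (P' q * q.1) = (↑d : WithBot (PP n))) ⊆ S.erase w := by
              intro q hq
              obtain ⟨hqGf, hqd⟩ := Finset.mem_filter.mp hq
              have hqw : q ≠ w := by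
                intro h; subst h
                rw [hqd] at hwlt
                exact (@lt_irrefl _ (@WithBot.instPreorder _ o1.ord.toPreorder) _) hwlt
              exact Finset.mem_erase.mpr ⟨hqw,
                Finset.mem_filter.mpr ⟨hqGf, hdrop q hqGf hqw hqd⟩⟩
            rw [hCP, hCP']
            calc (hfin.toFinset.filter
                (fun q => lppW o1 (P' q * q.1) = (↑d : WithBot (PP n)))).card
                ≤ (S.erase w).card := Finset.card_le_card hsub
              _ < S.card := Finset.card_erase_lt_of_mem hwS
          exact IH (Dof o1 hfin P', Cnt o1 hfin P')
            (by rw [hDeq, hD]; exact Prod.Lex.right _ hcnt) P' hP' rfl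
        · have hDlt : wbltP o1 (Dof o1 hfin P') ↑d :=
            @lt_of_le_of_ne _ (@WithBot.instPartialOrder _ o1.ord.toPartialOrder) _ _ hD'le hDeq
          exact IH (Dof o1 hfin P', Cnt o1 hfin P')
            (by rw [hD]; exact Prod.Lex.left _ _ hDlt) P' hP' rfl
      -- orientation of the critical pair
      rcases @lt_trichotomy _ (@WithBot.linearOrder _ o2.ord)
        (lppMW o2 (smulPP (tf o1 k.1 l.1) k.2)) (lppMW o2 (smulPP (tf o1 l.1 k.1) l.2)) with
        hAB | hAB | hAB
      · -- (l, k) is a critical pair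
        have hcp : IsCritPairL o1 o2 later l k := ⟨hl1, hk1, Or.inl hAB⟩
        obtain ⟨P', hP', hble, hllt, hdrop⟩ := surgery hpot hfin hP hD hlGf hkGf
          (Ne.symm hkl) hld hkd (hyp l hlG k hkG hcp)
        exact finish l hlS P' hP' hble hllt hdrop
      · -- equal signatures: use the `later` order
        rcases hsto.2.2 k hkG l hlG hkl with hlater | hlater
        · -- later k l : (l, k) is a critical pair
          have hcp : IsCritPairL o1 o2 later l k := ⟨hl1, hk1, Or.inr ⟨hAB.symm, hlater⟩⟩
          obtain ⟨P', hP', hble, hllt, hdrop⟩ := surgery hpot hfin hP hD hlGf hkGf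
            (Ne.symm hkl) hld hkd (hyp l hlG k hkG hcp)
          exact finish l hlS P' hP' hble hllt hdrop
        · -- later l k : (k, l) is a critical pair
          have hcp : IsCritPairL o1 o2 later k l := ⟨hk1, hl1, Or.inr ⟨hAB, hlater⟩⟩
          obtain ⟨P', hP', hble, hklt, hdrop⟩ := surgery hpot hfin hP hD hkGf hlGf
            hkl hkd hld (hyp k hkG l hlG hcp)
          exact finish k hkS P' hP' hble hklt hdrop
      · -- (k, l) is a critical pair
        have hcp : IsCritPairL o1 o2 later k l := ⟨hk1, hl1, Or.inl hAB⟩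
        obtain ⟨P', hP', hble, hklt, hdrop⟩ := surgery hpot hfin hP hD hkGf hlGf
          hkl hkd hld (hyp k hkG l hlG hcp)
        exact finish k hkS P' hP' hble hklt hdrop
  exact main (Dof o1 hfin P, Cnt o1 hfin P) P hPrep rfl

end MainInduction
end Stmt12
end Aux

/-- (Correctness lemma.) Let `≺₂` be the position-over-term extension of
`≺₁` and `G` a finite set of labeled polynomials of `I` containing all `fᵢ^[eᵢ]`. If the
S-polynomial of every critical pair of `G` has a standard representation w.r.t. `G`, then
`G` is a full-labeled Gröbner basis for `I`. -/
theorem detachability_stmt12 {K : Type*} [Field K] {n m : ℕ}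
    (o1 : MonOrd n) (o2 : ModOrd n m) (hpot : IsPOT o1 o2)
    (F : Fin m → MvPolynomial (Fin n) K)
    (G : Set (MvPolynomial (Fin n) K × ModElem K n m)) (hfin : G.Finite)
    (hlab : ∀ p ∈ G, p.1 = dotF p.2 F)
    (later : (MvPolynomial (Fin n) K × ModElem K n m) →
      (MvPolynomial (Fin n) K × ModElem K n m) → Prop)
    (hsto : StrictTotalOn G later)
    (hFmem : ∀ i : Fin m, (F i, eVec i) ∈ G)
    (hyp : ∀ p ∈ G, ∀ q ∈ G, IsCritPairL o1 o2 later p q →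
      HasStdRep o1 o2 G (sPolyF o1 p q) (sPolyU o1 p q)) :
    IsFullLGBSet o1 o2 F G := by
  refine ⟨hlab, ?_⟩
  intro f u hu hf0
  have hrep := Stmt12.rep_exists (o2 := o2) (hfin := hfin) hFmem hu
  obtain ⟨p, hpG, h1, h2, h3⟩ :=
    Stmt12.main_induction hpot hfin later hsto hyp hf0 hrep
  exact ⟨p, hpG, h1, h2, h3⟩
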